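/- Hard Lefschetz injectivity (pointwise linear-algebra form underlying Lemma 3.4, injective part): for all natural numbers p, k with 2p + 2k ≤ 2n (equivalently p + k ≤ n), the Lefschetz map L_ω^k : ⋀^p V → ⋀^{p+2k} V, α ↦ ω^k ∧ α, is injective; i.e., if α ∈ ⋀^p V and ω^k ∧ α = 0, then α = 0. -/

import Mathlib

/-!
Let `L = ω ∧ ·` and `Λ = ∑ᵢ fᵢ* ⌋ eᵢ* ⌋ ·`, contraction by the dual basis. On `⋀^p`
they satisfy the `sl₂` relation `[Λ, L] = n - p`, hence
`Λ Lᵏ⁺¹ x = Lᵏ⁺¹ Λ x + (k + 1)(n - p - k) Lᵏ x`.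
If `Lᵏ⁺¹ x = 0` with `p + k + 1 ≤ n`, applying `Λ` and then `L` gives `Lᵏ⁺² Λ x = 0`, so `Λ x = 0`
by induction on the degree `p`; the relation then leaves the nonzero multiple
`(k + 1)(n - p - k) Lᵏ x = 0`, and induction on `k` finishes.
-/

open ExteriorAlgebra

namespace ExteriorAlgebra

open CliffordAlgebra (contractLeft contractLeft_ι contractLeft_ι_mul contractLeft_algebraMap)

variable {R M : Type*} [CommRing R] [AddCommGroup M] [Module R M]

theorem ι_mem_exteriorPower_one (v : M) : ι R v ∈ ⋀[R]^1 M := by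
  simpa only [pow_one] using LinearMap.mem_range_self _ v

theorem ι_mul_mem_exteriorPower_succ (v : M) {p : ℕ} {x : ExteriorAlgebra R M}
    (hx : x ∈ ⋀[R]^p M) : ι R v * x ∈ ⋀[R]^(p + 1) M := by
  rw [add_comm]
  exact SetLike.mul_mem_graded (ι_mem_exteriorPower_one v) hx

theorem contractLeft_eq_zero_of_mem_exteriorPower_zero (d : Module.Dual R M)
    {x : ExteriorAlgebra R M} (hx : x ∈ ⋀[R]^0 M) : contractLeft d x = 0 := by
  rw [exteriorPower, pow_zero, Submodule.one_eq_range] at hx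
  obtain ⟨r, rfl⟩ := hx
  exact contractLeft_algebraMap _ _ _

theorem contractLeft_mem_exteriorPower (d : Module.Dual R M) {p : ℕ} {x : ExteriorAlgebra R M}
    (hx : x ∈ ⋀[R]^(p + 1) M) : contractLeft d x ∈ ⋀[R]^p M := by
  induction p generalizing x with
  | zero =>
    rw [exteriorPower, zero_add, pow_one] at hx
    obtain ⟨v, rfl⟩ := hx
    rw [contractLeft_ι]
    exact Submodule.algebraMap_mem _
  | succ q ih =>
    rw [exteriorPower, pow_succ'] at hx
    induction hx using Submodule.mul_induction_on' with
    | mem_mul_mem m hm y hy =>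
      obtain ⟨v, rfl⟩ := hm
      rw [contractLeft_ι_mul]
      exact sub_mem (Submodule.smul_mem _ _ hy) (ι_mul_mem_exteriorPower_succ v (ih hy))
    | add x y _ _ hx hy => rw [map_add]; exact add_mem hx hy

theorem contractLeft_ι_mul_ι_mul (d : Module.Dual R M) (u w : M) (x : ExteriorAlgebra R M) :
    contractLeft d (ι R u * (ι R w * x)) =
      d u • (ι R w * x) - d w • (ι R u * x) + ι R u * (ι R w * contractLeft d x) := by
  simp only [contractLeft_ι_mul, mul_sub, mul_smul_comm]
  abel

theorem sum_ι_mul_contractLeft_coord {I : Type*} [Fintype I] (b : Module.Basis I R M) {p : ℕ}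
    {x : ExteriorAlgebra R M} (hx : x ∈ ⋀[R]^p M) :
    ∑ j, ι R (b j) * contractLeft (b.coord j) x = (p : R) • x := by
  induction hx using Submodule.pow_induction_on_left' with
  | algebraMap r => simp [contractLeft_algebraMap]
  | add x y i _ _ hx hy => simp only [map_add, mul_add, Finset.sum_add_distrib, hx, hy, smul_add]
  | mem_mul m hm i x _ hx =>
    obtain ⟨v, rfl⟩ := hm
    have hv : ∑ j, b.coord j v • ι R (b j) = ι R v := by
      simp only [← map_smul, ← map_sum, Module.Basis.coord_apply, b.sum_repr]
    have hswap : ∀ j, ι R (b j) * ι R v = -(ι R v * ι R (b j)) := fun j =>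
      eq_neg_of_add_eq_zero_left (ι_add_mul_swap _ _)
    calc ∑ j, ι R (b j) * contractLeft (b.coord j) (ι R v * x)
        = (∑ j, b.coord j v • ι R (b j)) * x
            + ι R v * ∑ j, ι R (b j) * contractLeft (b.coord j) x := by
          simp only [contractLeft_ι_mul, mul_sub, Finset.sum_mul, Finset.mul_sum, ← mul_assoc,
            hswap, mul_smul_comm, smul_mul_assoc, neg_mul, sub_neg_eq_add, Finset.sum_add_distrib]
      _ = ((i.succ : ℕ) : R) • (ι R v * x) := by
          rw [hv, hx, mul_smul_comm, Nat.cast_succ, add_smul, one_smul, add_comm]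

section Symplectic

variable {I : Type*} [Fintype I] (b : Module.Basis (I ⊕ I) R M)

noncomputable def symplecticForm : ExteriorAlgebra R M :=
  ∑ i, ι R (b (.inl i)) * ι R (b (.inr i))

noncomputable def dualLefschetz : ExteriorAlgebra R M →ₗ[R] ExteriorAlgebra R M :=
  ∑ i, contractLeft (b.coord (.inr i)) ∘ₗ contractLeft (b.coord (.inl i))

theorem dualLefschetz_apply (x : ExteriorAlgebra R M) :
    dualLefschetz b x =
      ∑ i, contractLeft (b.coord (.inr i)) (contractLeft (b.coord (.inl i)) x) := by
  simp only [dualLefschetz, LinearMap.sum_apply, LinearMap.comp_apply]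

theorem symplecticForm_mem_exteriorPower_two : symplecticForm b ∈ ⋀[R]^2 M :=
  Submodule.sum_mem _ fun _ _ => ι_mul_mem_exteriorPower_succ _ (ι_mem_exteriorPower_one _)

theorem symplecticForm_pow_mul_mem_exteriorPower (k : ℕ) {p : ℕ} {x : ExteriorAlgebra R M}
    (hx : x ∈ ⋀[R]^p M) : symplecticForm b ^ k * x ∈ ⋀[R]^(k • 2 + p) M :=
  SetLike.mul_mem_graded (SetLike.pow_mem_graded k (symplecticForm_mem_exteriorPower_two b)) hx

theorem dualLefschetz_mem_exteriorPower {p : ℕ} {x : ExteriorAlgebra R M}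
    (hx : x ∈ ⋀[R]^(p + 2) M) : dualLefschetz b x ∈ ⋀[R]^p M := by
  rw [dualLefschetz_apply]
  exact Submodule.sum_mem _ fun _ _ =>
    contractLeft_mem_exteriorPower _ (contractLeft_mem_exteriorPower _ hx)

theorem dualLefschetz_eq_zero_of_lt_two {p : ℕ} (hp : p < 2) {x : ExteriorAlgebra R M}
    (hx : x ∈ ⋀[R]^p M) : dualLefschetz b x = 0 := by
  rw [dualLefschetz_apply]
  refine Finset.sum_eq_zero fun i _ => ?_
  interval_cases p
  · rw [contractLeft_eq_zero_of_mem_exteriorPower_zero _ hx, map_zero]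
  · exact contractLeft_eq_zero_of_mem_exteriorPower_zero _ (contractLeft_mem_exteriorPower _ hx)

theorem contractLeft_symplecticForm_mul (d : Module.Dual R M) (x : ExteriorAlgebra R M) :
    contractLeft d (symplecticForm b * x) =
      ∑ i, (d (b (.inl i)) • (ι R (b (.inr i)) * x)
          - d (b (.inr i)) • (ι R (b (.inl i)) * x)) + symplecticForm b * contractLeft d x := by
  simp only [symplecticForm, Finset.sum_mul, mul_assoc, map_sum, contractLeft_ι_mul_ι_mul,
    Finset.sum_add_distrib]

theorem contractLeft_coord_inl_symplecticForm_mul (i : I) (x : ExteriorAlgebra R M) :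
    contractLeft (b.coord (.inl i)) (symplecticForm b * x) =
      ι R (b (.inr i)) * x + symplecticForm b * contractLeft (b.coord (.inl i)) x := by
  classical
  simp [contractLeft_symplecticForm_mul, Module.Basis.coord_apply, Finsupp.single_apply]

theorem contractLeft_coord_inr_symplecticForm_mul (i : I) (x : ExteriorAlgebra R M) :
    contractLeft (b.coord (.inr i)) (symplecticForm b * x) =
      -(ι R (b (.inl i)) * x) + symplecticForm b * contractLeft (b.coord (.inr i)) x := by
  classical
  simp [contractLeft_symplecticForm_mul, Module.Basis.coord_apply, Finsupp.single_apply]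

theorem dualLefschetz_symplecticForm_mul (x : ExteriorAlgebra R M) :
    dualLefschetz b (symplecticForm b * x) =
      (Fintype.card I : R) • x - ∑ j, ι R (b j) * contractLeft (b.coord j) x
        + symplecticForm b * dualLefschetz b x := by
  have hterm (i : I) :
      contractLeft (b.coord (.inr i)) (contractLeft (b.coord (.inl i)) (symplecticForm b * x)) =
        x - (ι R (b (.inl i)) * contractLeft (b.coord (.inl i)) x
          + ι R (b (.inr i)) * contractLeft (b.coord (.inr i)) x)
        + symplecticForm b *
          contractLeft (b.coord (.inr i)) (contractLeft (b.coord (.inl i)) x) := by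
    rw [contractLeft_coord_inl_symplecticForm_mul, map_add, contractLeft_ι_mul,
      contractLeft_coord_inr_symplecticForm_mul, b.coord_apply, b.repr_self,
      Finsupp.single_eq_same, one_smul]
    abel
  simp only [dualLefschetz_apply, hterm, Finset.sum_add_distrib, Finset.sum_sub_distrib,
    Fintype.sum_sum_type, Finset.mul_sum, Finset.sum_const, Finset.card_univ,
    Nat.cast_smul_eq_nsmul]

theorem dualLefschetz_symplecticForm_mul_of_mem {p : ℕ} {x : ExteriorAlgebra R M}
    (hx : x ∈ ⋀[R]^p M) :
    dualLefschetz b (symplecticForm b * x) =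
      ((Fintype.card I : R) - p) • x + symplecticForm b * dualLefschetz b x := by
  rw [dualLefschetz_symplecticForm_mul, sum_ι_mul_contractLeft_coord b hx, sub_smul]

theorem dualLefschetz_symplecticForm_pow_succ_mul (k : ℕ) {p : ℕ} {x : ExteriorAlgebra R M}
    (hx : x ∈ ⋀[R]^p M) :
    dualLefschetz b (symplecticForm b ^ (k + 1) * x) =
      symplecticForm b ^ (k + 1) * dualLefschetz b x
        + ((k + 1 : R) * ((Fintype.card I : R) - p - k)) • (symplecticForm b ^ k * x) := by
  induction k with
  | zero => simp [dualLefschetz_symplecticForm_mul_of_mem b hx, add_comm]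
  | succ k ih =>
    have hmem := symplecticForm_pow_mul_mem_exteriorPower b (k + 1) hx
    rw [pow_succ', mul_assoc, dualLefschetz_symplecticForm_mul_of_mem b hmem, ih, mul_add,
      mul_smul_comm, ← mul_assoc, ← pow_succ', ← mul_assoc, ← pow_succ']
    push_cast [smul_eq_mul]
    module

end Symplectic

section CharZero

variable {K V : Type*} [Field K] [CharZero K] [AddCommGroup V] [Module K V]
variable {I : Type*} [Fintype I] (b : Module.Basis (I ⊕ I) K V)

theorem eq_zero_of_symplecticForm_pow_mul_eq_zero {p k : ℕ} (hpk : p + k ≤ Fintype.card I)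
    {x : ExteriorAlgebra K V} (hx : x ∈ ⋀[K]^p V) (h : symplecticForm b ^ k * x = 0) :
    x = 0 := by
  induction p using Nat.strong_induction_on generalizing k x with | _ p ihp =>
  induction k with
  | zero => simpa using h
  | succ k ihk =>
    set c : K := (k + 1) * ((Fintype.card I : K) - p - k) with hc_def
    have hc : c ≠ 0 := by
      obtain ⟨m, hm⟩ := Nat.exists_eq_add_of_le hpk
      have : c = ((k + 1) * (m + 1) : ℕ) := by rw [hc_def, hm]; push_cast; ring
      rw [this]
      exact_mod_cast (Nat.mul_pos k.succ_pos m.succ_pos).ne'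
    have hΛ := dualLefschetz_symplecticForm_pow_succ_mul b k hx
    rw [h, map_zero] at hΛ
    have hprim : dualLefschetz b x = 0 := by
      rcases lt_or_ge p 2 with hp | hp
      · exact dualLefschetz_eq_zero_of_lt_two b hp hx
      obtain ⟨q, rfl⟩ : ∃ q, p = q + 2 := ⟨p - 2, by omega⟩
      refine ihp q (by omega) (k := k + 2) (by omega) (dualLefschetz_mem_exteriorPower b hx) ?_
      calc symplecticForm b ^ (k + 2) * dualLefschetz b x
          = symplecticForm b * (symplecticForm b ^ (k + 1) * dualLefschetz b x) := by
            rw [pow_succ' _ (k + 1), mul_assoc]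
        _ = -(c • (symplecticForm b ^ (k + 1) * x)) := by
            rw [eq_neg_of_add_eq_zero_left hΛ.symm, mul_neg, mul_smul_comm, ← mul_assoc,
              ← pow_succ']
        _ = 0 := by rw [h, smul_zero, neg_zero]
    rw [hprim, mul_zero, zero_add] at hΛ
    exact ihk (by omega) ((smul_eq_zero.mp hΛ.symm).resolve_left hc)

end CharZero

end ExteriorAlgebra

theorem hard_lefschetz_injective_general
    {V : Type*} [AddCommGroup V] [Module ℝ V] (n : ℕ)
    (b : Module.Basis (Fin n ⊕ Fin n) ℝ V)
    (e f : Fin n → V) (he : ∀ i, e i = b (Sum.inl i)) (hf : ∀ i, f i = b (Sum.inr i))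
    (ω : ExteriorAlgebra ℝ V) (hω : ω = ∑ i : Fin n, ι ℝ (e i) * ι ℝ (f i))
    (p k : ℕ) (hpk : p + k ≤ n) :
    ∀ α ∈ ⋀[ℝ]^p V, ω ^ k * α = 0 → α = 0 := by
  have hω_eq : ω = symplecticForm b := by simp only [hω, he, hf, symplecticForm]
  intro α hα hzero
  rw [hω_eq] at hzero
  exact eq_zero_of_symplecticForm_pow_mul_eq_zero b (by simpa using hpk) hα hzero

/-- Hard Lefschetz injectivity (pointwise linear-algebra form): for `p + k ≤ n`, the
Lefschetz map `L_ω^k : ⋀^p V → ⋀^{p+2k} V`, `α ↦ ω^k ∧ α`, is injective: if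
`α ∈ ⋀^p V` and `ω^k ∧ α = 0`, then `α = 0`. -/
theorem hard_lefschetz_injective
    {V : Type*} [AddCommGroup V] [Module ℝ V] (n : ℕ) (hn : 0 < n)
    (b : Module.Basis (Fin n ⊕ Fin n) ℝ V)
    (e f : Fin n → V) (he : ∀ i, e i = b (Sum.inl i)) (hf : ∀ i, f i = b (Sum.inr i))
    (ω : ExteriorAlgebra ℝ V) (hω : ω = ∑ i : Fin n, ι ℝ (e i) * ι ℝ (f i))
    (p k : ℕ) (hpk : p + k ≤ n) :
    ∀ α ∈ ⋀[ℝ]^p V, ω ^ k * α = 0 → α = 0 :=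
  hard_lefschetz_injective_general n b e f he hf ω hω p k hpk
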